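/- Let X and Y be Hilbert spaces, A : X → X' , B : X → Y', C : Y → Y' continuous linear operators such that A is non-negative and X-coercive on ker(B), B satisfies the inf-sup condition, and C is non-negative and symmetric. Then for every F₁ ∈ X' and F₂ ∈ Y' the system A x + B' y = F₁, −B x + C y = F₂ has a unique solution (x, y) ∈ X × Y, and this solution satisfies ‖x‖_X + ‖y‖_Y ≤ c (‖F₁‖_{X'} + ‖F₂‖_{Y'}) for a constant c independent of F₁, F₂. -/

import Mathlib

/-!
A priori estimate: split `x = x₀ + x₁` along `ker B ⊕ (ker B)ᗮ`. The inf-sup condition makes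
`B` bounded below on `(ker B)ᗮ`, which bounds `x₁` by `‖B x‖`; coercivity on `ker B` bounds `x₀`,
and the inf-sup condition again bounds `y` by `‖A x + B' y‖ + ‖A‖ ‖x‖`. This controls
`‖x‖ + ‖y‖` by the data and `‖C y‖`. Testing the system with `(x, y)` gives
`C y y ≤ (data) (‖x‖ + ‖y‖)`, and Cauchy–Schwarz for the non-negative symmetric form `C` gives
`‖C y‖² ≤ ‖C‖ C y y`, so `‖C y‖` is controlled by the data as well.

Existence: the system is a single bilinear form on the Hilbert space `X × Y`. The estimate makes
its Riesz operator bounded below, hence of closed range; the transposed system is a system of the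
same kind (with `A` transposed and `y` replaced by `-y`), so the estimate also makes that range
dense.
-/

open scoped InnerProductSpace

theorem mul_le_of_mul_sq_le {a b t : ℝ} (hb : 0 ≤ b) (ht : 0 ≤ t) (h : a * t ^ 2 ≤ b * t) :
    a * t ≤ b := by
  rcases ht.eq_or_lt with rfl | ht
  · simpa using hb
  · exact le_of_mul_le_mul_right (by linarith) ht

theorem le_mul_of_sq_le_mul_mul_add {u F k : ℝ} (hF : 0 ≤ F) (hk : 0 ≤ k)
    (h : u ^ 2 ≤ k * F * (F + u)) : u ≤ (k + 1) * F := by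
  nlinarith [mul_nonneg hk hF]

section Normed

variable {X Y : Type*} [NormedAddCommGroup X] [NormedSpace ℝ X]
  [NormedAddCommGroup Y] [NormedSpace ℝ Y]

theorem mul_norm_le_of_coercive_of_apply_eq_zero (A : X →L[ℝ] X →L[ℝ] ℝ)
    (B : X →L[ℝ] Y →L[ℝ] ℝ) {α : ℝ} {x₀ : X} (hx₀ : B x₀ = 0)
    (hcoer : α * ‖x₀‖ ^ 2 ≤ A x₀ x₀) (x : X) (y : Y) :
    α * ‖x₀‖ ≤ ‖A x + B.flip y‖ + ‖A‖ * ‖x - x₀‖ := by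
  refine mul_le_of_mul_sq_le (by positivity) (norm_nonneg _) ?_
  have hsplit : A x₀ x₀ = (A x + B.flip y) x₀ - A (x - x₀) x₀ := by simp [hx₀]
  calc α * ‖x₀‖ ^ 2 ≤ (A x + B.flip y) x₀ - A (x - x₀) x₀ := hsplit ▸ hcoer
    _ ≤ ‖A x + B.flip y‖ * ‖x₀‖ + ‖A‖ * ‖x - x₀‖ * ‖x₀‖ := by
      have h₁ := (le_abs_self _).trans ((A x + B.flip y).le_opNorm x₀)
      have h₂ := (neg_le_abs _).trans (A.le_opNorm₂ (x - x₀) x₀)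
      linarith
    _ = (‖A x + B.flip y‖ + ‖A‖ * ‖x - x₀‖) * ‖x₀‖ := by ring

theorem sq_apply_le_apply_self_mul_apply_self (C : Y →L[ℝ] Y →L[ℝ] ℝ)
    (hCnonneg : ∀ y, 0 ≤ C y y) (hCsymm : ∀ y z, C y z = C z y) (y z : Y) :
    C y z ^ 2 ≤ C y y * C z z := by
  have hquad (t : ℝ) : 0 ≤ C z z * (t * t) + 2 * C y z * t + C y y := by
    have := hCnonneg (y + t • z)
    simp only [map_add, map_smul, add_apply, smul_apply, smul_eq_mul, hCsymm z y] at this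
    linarith
  have := discrim_le_zero hquad
  rw [discrim] at this
  linarith

theorem sq_norm_apply_le_opNorm_mul_apply_self (C : Y →L[ℝ] Y →L[ℝ] ℝ)
    (hCnonneg : ∀ y, 0 ≤ C y y) (hCsymm : ∀ y z, C y z = C z y) (y : Y) :
    ‖C y‖ ^ 2 ≤ ‖C‖ * C y y := by
  have hbound : ‖C y‖ ≤ √(‖C‖ * C y y) := by
    refine (C y).opNorm_le_bound (Real.sqrt_nonneg _) fun z => ?_
    rw [← Real.sqrt_sq (norm_nonneg z), ← Real.sqrt_mul' _ (sq_nonneg _)]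
    refine Real.abs_le_sqrt ?_
    calc C y z ^ 2 ≤ C y y * C z z := sq_apply_le_apply_self_mul_apply_self C hCnonneg hCsymm y z
      _ ≤ C y y * (‖C‖ * ‖z‖ * ‖z‖) := by
        gcongr
        · exact hCnonneg y
        · exact (le_abs_self _).trans (C.le_opNorm₂ z z)
      _ = ‖C‖ * C y y * ‖z‖ ^ 2 := by ring
  calc ‖C y‖ ^ 2 ≤ √(‖C‖ * C y y) ^ 2 := by gcongr
    _ = ‖C‖ * C y y := Real.sq_sqrt (mul_nonneg (norm_nonneg C) (hCnonneg y))

theorem apply_self_add_apply_self (A : X →L[ℝ] X →L[ℝ] ℝ) (B : X →L[ℝ] Y →L[ℝ] ℝ)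
    (C : Y →L[ℝ] Y →L[ℝ] ℝ) (x : X) (y : Y) :
    A x x + C y y = (A x + B.flip y) x + (-B x + C y) y := by
  simp only [add_apply, neg_apply, ContinuousLinearMap.flip_apply]
  ring

theorem eq_of_norm_add_norm_le {A : X →L[ℝ] X →L[ℝ] ℝ} {B : X →L[ℝ] Y →L[ℝ] ℝ}
    {C : Y →L[ℝ] Y →L[ℝ] ℝ} {γ : ℝ}
    (hest : ∀ x y, ‖x‖ + ‖y‖ ≤ γ * (‖A x + B.flip y‖ + ‖-B x + C y‖)) {x x' : X} {y y' : Y}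
    (h₁ : A x + B.flip y = A x' + B.flip y') (h₂ : -B x + C y = -B x' + C y') :
    x = x' ∧ y = y' := by
  have hres₁ : A (x - x') + B.flip (y - y') = 0 := by
    rw [map_sub, map_sub, ← sub_eq_zero.2 h₁]
    abel
  have hres₂ : -B (x - x') + C (y - y') = 0 := by
    rw [map_sub, map_sub, ← sub_eq_zero.2 h₂]
    abel
  have h := hest (x - x') (y - y')
  rw [hres₁, hres₂, ContinuousLinearMap.opNorm_zero, ContinuousLinearMap.opNorm_zero, add_zero,
    mul_zero] at h
  have hx := norm_nonneg (x - x')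
  have hy := norm_nonneg (y - y')
  exact ⟨sub_eq_zero.1 (norm_le_zero_iff.1 (by linarith)),
    sub_eq_zero.1 (norm_le_zero_iff.1 (by linarith))⟩

end Normed

section Estimate

variable {X Y : Type*} [NormedAddCommGroup X] [InnerProductSpace ℝ X] [CompleteSpace X]
  [NormedAddCommGroup Y] [NormedSpace ℝ Y] [CompleteSpace Y]

theorem mul_norm_le_norm_apply_of_mem_orthogonal_ker (B : X →L[ℝ] Y →L[ℝ] ℝ) {β : ℝ}
    (hβ : 0 < β) (hinfsup : ∀ y, β * ‖y‖ ≤ ‖B.flip y‖) {x : X}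
    (hx : x ∈ B.kerᗮ) : β * ‖x‖ ≤ ‖B x‖ := by
  -- `R` is bounded below, so its range is closed and hence equal to `(ker B)ᗮ`;
  -- for `x = R y` we then have `‖x‖² = B x y`.
  set R : Y →L[ℝ] X :=
    (InnerProductSpace.toDual ℝ X).symm.toContinuousLinearEquiv.toContinuousLinearMap ∘L B.flip
  have inner_R (y : Y) (v : X) : ⟪R y, v⟫_ℝ = B v y := InnerProductSpace.toDual_symm_apply
  have norm_R (y : Y) : ‖R y‖ = ‖B.flip y‖ := (InnerProductSpace.toDual ℝ X).symm.norm_map _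
  have hR : AntilipschitzWith ⟨β⁻¹, by positivity⟩ R :=
    R.antilipschitz_of_bound fun y => by
      change ‖y‖ ≤ β⁻¹ * ‖R y‖
      rw [norm_R, inv_mul_eq_div, le_div_iff₀ hβ, mul_comm]
      exact hinfsup y
  have := hR.completeSpace_range_clm
  have hperp : R.rangeᗮ = B.ker := by
    ext z
    simp [Submodule.mem_orthogonal, inner_R, ContinuousLinearMap.ext_iff]
  rw [← hperp, Submodule.orthogonal_orthogonal] at hx
  obtain ⟨y, rfl⟩ := hx
  refine mul_le_of_mul_sq_le (norm_nonneg _) (norm_nonneg _) ?_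
  calc β * ‖R y‖ ^ 2 = β * B (R y) y := by rw [← inner_R, real_inner_self_eq_norm_sq]
    _ ≤ β * (‖B (R y)‖ * ‖y‖) := by gcongr; exact (le_abs_self _).trans ((B (R y)).le_opNorm y)
    _ = ‖B (R y)‖ * (β * ‖y‖) := by ring
    _ ≤ ‖B (R y)‖ * ‖R y‖ := by gcongr; exact (norm_R y).symm ▸ hinfsup y

theorem exists_norm_le_of_coercive_of_infSup (A : X →L[ℝ] X →L[ℝ] ℝ) (B : X →L[ℝ] Y →L[ℝ] ℝ)
    (hAcoer : ∃ α > 0, ∀ x : X, (∀ w : Y, B x w = 0) → α * ‖x‖ ^ 2 ≤ A x x)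
    (hinfsup : ∃ β > 0, ∀ y : Y, β * ‖y‖ ≤ ‖B.flip y‖) :
    ∃ κ > 0, ∀ x y, ‖x‖ ≤ κ * (‖A x + B.flip y‖ + ‖B x‖) := by
  obtain ⟨α, hα, hcoer⟩ := hAcoer
  obtain ⟨β, hβ, hinfsup⟩ := hinfsup
  have : CompleteSpace B.ker := B.isClosed_ker.completeSpace_coe
  refine ⟨β⁻¹ + α⁻¹ * (1 + ‖A‖ * β⁻¹), by positivity, fun x y => ?_⟩
  set s := ‖A x + B.flip y‖ + ‖B x‖
  set x₀ := B.ker.starProjection x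
  have hx₀_ker : B x₀ = 0 := B.ker.starProjection_apply_mem x
  have hx₁ : ‖x - x₀‖ ≤ β⁻¹ * s := by
    have := mul_norm_le_norm_apply_of_mem_orthogonal_ker B hβ hinfsup
      (B.ker.sub_starProjection_mem_orthogonal x)
    rw [map_sub, hx₀_ker, sub_zero] at this
    rw [inv_mul_eq_div, le_div_iff₀ hβ]
    linarith [norm_nonneg (A x + B.flip y)]
  have hx₀ : ‖x₀‖ ≤ α⁻¹ * (1 + ‖A‖ * β⁻¹) * s := by
    have := mul_norm_le_of_coercive_of_apply_eq_zero A B hx₀_ker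
      (hcoer x₀ fun w => by rw [hx₀_ker]; rfl) x y
    rw [mul_assoc, inv_mul_eq_div, le_div_iff₀ hα]
    calc ‖x₀‖ * α ≤ ‖A x + B.flip y‖ + ‖A‖ * ‖x - x₀‖ := by linarith
      _ ≤ s + ‖A‖ * (β⁻¹ * s) := by gcongr; linarith [norm_nonneg (B x)]
      _ = (1 + ‖A‖ * β⁻¹) * s := by ring
  calc ‖x‖ ≤ ‖x₀‖ + ‖x - x₀‖ := norm_le_norm_add_norm_sub' x x₀
    _ ≤ _ := by linarith

theorem exists_norm_add_norm_le_of_coercive_of_infSup (A : X →L[ℝ] X →L[ℝ] ℝ)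
    (B : X →L[ℝ] Y →L[ℝ] ℝ)
    (hAcoer : ∃ α > 0, ∀ x : X, (∀ w : Y, B x w = 0) → α * ‖x‖ ^ 2 ≤ A x x)
    (hinfsup : ∃ β > 0, ∀ y : Y, β * ‖y‖ ≤ ‖B.flip y‖) :
    ∃ K > 0, ∀ x y, ‖x‖ + ‖y‖ ≤ K * (‖A x + B.flip y‖ + ‖B x‖) := by
  obtain ⟨κ, hκ, hx⟩ := exists_norm_le_of_coercive_of_infSup A B hAcoer hinfsup
  obtain ⟨β, hβ, hinfsup⟩ := hinfsup
  refine ⟨κ + β⁻¹ * (1 + ‖A‖ * κ), by positivity, fun x y => ?_⟩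
  set s := ‖A x + B.flip y‖ + ‖B x‖
  have hy : ‖y‖ ≤ β⁻¹ * (1 + ‖A‖ * κ) * s := by
    rw [mul_assoc, inv_mul_eq_div, le_div_iff₀ hβ]
    calc ‖y‖ * β ≤ ‖(A x + B.flip y) - A x‖ := by rw [add_sub_cancel_left]; linarith [hinfsup y]
      _ ≤ ‖A x + B.flip y‖ + ‖A‖ * ‖x‖ := (norm_sub_le _ _).trans (by gcongr; exact A.le_opNorm x)
      _ ≤ s + ‖A‖ * (κ * s) := by
        gcongr
        · linarith [norm_nonneg (B x)]
        · exact hx x y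
      _ = (1 + ‖A‖ * κ) * s := by ring
  linarith [hx x y]

theorem exists_norm_add_norm_le_of_coercive_of_infSup_of_nonneg (A : X →L[ℝ] X →L[ℝ] ℝ)
    (B : X →L[ℝ] Y →L[ℝ] ℝ) (C : Y →L[ℝ] Y →L[ℝ] ℝ)
    (hAnonneg : ∀ x : X, 0 ≤ A x x)
    (hAcoer : ∃ α > 0, ∀ x : X, (∀ w : Y, B x w = 0) → α * ‖x‖ ^ 2 ≤ A x x)
    (hinfsup : ∃ β > 0, ∀ y : Y, β * ‖y‖ ≤ ‖B.flip y‖)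
    (hCnonneg : ∀ y : Y, 0 ≤ C y y) (hCsymm : ∀ y z : Y, C y z = C z y) :
    ∃ γ > 0, ∀ x y, ‖x‖ + ‖y‖ ≤ γ * (‖A x + B.flip y‖ + ‖-B x + C y‖) := by
  obtain ⟨K, hK, hbrezzi⟩ := exists_norm_add_norm_le_of_coercive_of_infSup A B hAcoer hinfsup
  refine ⟨K * (‖C‖ * K + 2), by positivity, fun x y => ?_⟩
  set F := ‖A x + B.flip y‖ + ‖-B x + C y‖
  set u := ‖C y‖
  have hN : ‖x‖ + ‖y‖ ≤ K * (F + u) := by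
    refine (hbrezzi x y).trans (mul_le_mul_of_nonneg_left ?_ hK.le)
    have : ‖B x‖ ≤ ‖-B x + C y‖ + u := by
      simpa [← sub_eq_neg_add] using norm_sub_le (-B x + C y) (C y)
    linarith
  have henergy : C y y ≤ F * (‖x‖ + ‖y‖) :=
    calc C y y ≤ A x x + C y y := le_add_of_nonneg_left (hAnonneg x)
      _ = (A x + B.flip y) x + (-B x + C y) y := apply_self_add_apply_self A B C x y
      _ ≤ ‖A x + B.flip y‖ * ‖x‖ + ‖-B x + C y‖ * ‖y‖ :=
        add_le_add ((le_abs_self _).trans ((A x + B.flip y).le_opNorm x))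
          ((le_abs_self _).trans ((-B x + C y).le_opNorm y))
      _ ≤ F * (‖x‖ + ‖y‖) := by
        nlinarith [mul_nonneg (norm_nonneg (A x + B.flip y)) (norm_nonneg y),
          mul_nonneg (norm_nonneg (-B x + C y)) (norm_nonneg x)]
  have hu : u ≤ (‖C‖ * K + 1) * F := by
    refine le_mul_of_sq_le_mul_mul_add (by positivity) (by positivity) ?_
    calc u ^ 2 ≤ ‖C‖ * C y y := sq_norm_apply_le_opNorm_mul_apply_self C hCnonneg hCsymm y
      _ ≤ ‖C‖ * (F * (K * (F + u))) := by gcongr; exact henergy.trans (by gcongr)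
      _ = ‖C‖ * K * F * (F + u) := by ring
  calc ‖x‖ + ‖y‖ ≤ K * (F + u) := hN
    _ ≤ K * (F + (‖C‖ * K + 1) * F) := by gcongr
    _ = K * (‖C‖ * K + 2) * F := by ring

end Estimate

section Hilbert

variable {H : Type*} [NormedAddCommGroup H] [InnerProductSpace ℝ H] [CompleteSpace H]

theorem surjective_of_norm_le_of_injective_flip (M : H →L[ℝ] H →L[ℝ] ℝ) {γ : ℝ}
    (hbelow : ∀ p, ‖p‖ ≤ γ * ‖M p‖) (hflip : Function.Injective M.flip) :
    Function.Surjective M := by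
  set T := InnerProductSpace.continuousLinearMapOfBilin M
  have norm_T (p : H) : ‖T p‖ = ‖M p‖ := (InnerProductSpace.toDual ℝ H).symm.norm_map _
  have hanti : AntilipschitzWith γ.toNNReal T :=
    T.antilipschitz_of_bound fun p =>
      (hbelow p).trans (by rw [norm_T]; gcongr; exact Real.le_coe_toNNReal γ)
  have hdense : T.range.topologicalClosure = ⊤ := by
    rw [Submodule.topologicalClosure_eq_top_iff, Submodule.eq_bot_iff]
    intro q hq
    refine hflip (ContinuousLinearMap.ext fun p => ?_)
    simpa [T] using hq (T p) ⟨p, rfl⟩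
  have hsurj := ((T.bijective_iff_dense_range_and_antilipschitz).2 ⟨hdense, _, hanti⟩).2
  intro F
  obtain ⟨p, hp⟩ := hsurj ((InnerProductSpace.toDual ℝ H).symm F)
  refine ⟨p, ContinuousLinearMap.ext fun v => ?_⟩
  rw [← InnerProductSpace.continuousLinearMapOfBilin_apply, hp,
    InnerProductSpace.toDual_symm_apply]

end Hilbert

section SaddlePoint

variable {X Y : Type*} [NormedAddCommGroup X] [InnerProductSpace ℝ X]
  [NormedAddCommGroup Y] [InnerProductSpace ℝ Y]

open WithLp

noncomputable def saddleForm (A : X →L[ℝ] X →L[ℝ] ℝ) (B : X →L[ℝ] Y →L[ℝ] ℝ)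
    (C : Y →L[ℝ] Y →L[ℝ] ℝ) : WithLp 2 (X × Y) →L[ℝ] WithLp 2 (X × Y) →L[ℝ] ℝ :=
  A.bilinearComp (fstL 2 ℝ X Y) (fstL 2 ℝ X Y) + B.flip.bilinearComp (sndL 2 ℝ X Y) (fstL 2 ℝ X Y)
    - B.bilinearComp (fstL 2 ℝ X Y) (sndL 2 ℝ X Y) + C.bilinearComp (sndL 2 ℝ X Y) (sndL 2 ℝ X Y)

variable (A : X →L[ℝ] X →L[ℝ] ℝ) (B : X →L[ℝ] Y →L[ℝ] ℝ) (C : Y →L[ℝ] Y →L[ℝ] ℝ)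

@[simp]
theorem saddleForm_apply (p q : WithLp 2 (X × Y)) :
    saddleForm A B C p q = (A p.fst + B.flip p.snd) q.fst + (-B p.fst + C p.snd) q.snd := by
  simp [saddleForm]
  ring

theorem norm_add_flip_le_norm_saddleForm (p : WithLp 2 (X × Y)) :
    ‖A p.fst + B.flip p.snd‖ ≤ ‖saddleForm A B C p‖ :=
  ContinuousLinearMap.opNorm_le_bound _ (norm_nonneg (saddleForm A B C p)) fun v => by
    simpa using (saddleForm A B C p).le_opNorm (toLp 2 (v, 0))

theorem norm_neg_add_le_norm_saddleForm (p : WithLp 2 (X × Y)) :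
    ‖-B p.fst + C p.snd‖ ≤ ‖saddleForm A B C p‖ :=
  ContinuousLinearMap.opNorm_le_bound _ (norm_nonneg (saddleForm A B C p)) fun w => by
    simpa using (saddleForm A B C p).le_opNorm (toLp 2 (0, w))

theorem norm_le_of_norm_add_norm_le {γ : ℝ} (hγ : 0 ≤ γ)
    (hest : ∀ x y, ‖x‖ + ‖y‖ ≤ γ * (‖A x + B.flip y‖ + ‖-B x + C y‖)) (p : WithLp 2 (X × Y)) :
    ‖p‖ ≤ 2 * γ * ‖saddleForm A B C p‖ := by
  have hp : ‖p‖ ≤ ‖p.fst‖ + ‖p.snd‖ := by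
    nlinarith [prod_norm_sq_eq_of_L2 p, norm_nonneg p, norm_nonneg p.fst, norm_nonneg p.snd]
  calc ‖p‖ ≤ γ * (‖A p.fst + B.flip p.snd‖ + ‖-B p.fst + C p.snd‖) := hp.trans (hest _ _)
    _ ≤ γ * (‖saddleForm A B C p‖ + ‖saddleForm A B C p‖) := by
      gcongr
      · exact norm_add_flip_le_norm_saddleForm A B C p
      · exact norm_neg_add_le_norm_saddleForm A B C p
    _ = 2 * γ * ‖saddleForm A B C p‖ := by ring

theorem saddleForm_flip_apply (hCsymm : ∀ y z : Y, C y z = C z y) (p q : WithLp 2 (X × Y)) :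
    saddleForm A B C p q =
      saddleForm A.flip B C (toLp 2 (q.fst, -q.snd)) (toLp 2 (p.fst, -p.snd)) := by
  simp [hCsymm p.snd]
  ring

theorem injective_flip_saddleForm (hCsymm : ∀ y z : Y, C y z = C z y) {γ : ℝ} (hγ : 0 ≤ γ)
    (hest : ∀ x y, ‖x‖ + ‖y‖ ≤ γ * (‖A.flip x + B.flip y‖ + ‖-B x + C y‖)) :
    Function.Injective (saddleForm A B C).flip := by
  refine (injective_iff_map_eq_zero _).2 fun q hq => ?_
  have hzero : saddleForm A.flip B C (toLp 2 (q.fst, -q.snd)) = 0 := by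
    ext p
    simpa [saddleForm_flip_apply A B C hCsymm (toLp 2 (p.fst, -p.snd))] using
      congr($hq (toLp 2 (p.fst, -p.snd)))
  have := norm_le_of_norm_add_norm_le A.flip B C hγ hest (toLp 2 (q.fst, -q.snd))
  rw [hzero, ContinuousLinearMap.opNorm_zero, mul_zero, norm_le_zero_iff] at this
  simp only [toLp_eq_zero, Prod.mk_eq_zero, neg_eq_zero] at this
  rw [← ofLp_eq_zero]
  exact Prod.ext this.1 this.2

theorem exists_add_flip_eq_and_neg_add_eq [CompleteSpace X] [CompleteSpace Y]
    (hAnonneg : ∀ x : X, 0 ≤ A x x)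
    (hAcoer : ∃ α > 0, ∀ x : X, (∀ w : Y, B x w = 0) → α * ‖x‖ ^ 2 ≤ A x x)
    (hinfsup : ∃ β > 0, ∀ y : Y, β * ‖y‖ ≤ ‖B.flip y‖)
    (hCnonneg : ∀ y : Y, 0 ≤ C y y) (hCsymm : ∀ y z : Y, C y z = C z y)
    (F₁ : X →L[ℝ] ℝ) (F₂ : Y →L[ℝ] ℝ) :
    ∃ p : X × Y, A p.1 + B.flip p.2 = F₁ ∧ -B p.1 + C p.2 = F₂ := by
  obtain ⟨γ, hγ, hest⟩ := exists_norm_add_norm_le_of_coercive_of_infSup_of_nonneg A B C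
    hAnonneg hAcoer hinfsup hCnonneg hCsymm
  obtain ⟨γ', hγ', hest'⟩ := exists_norm_add_norm_le_of_coercive_of_infSup_of_nonneg A.flip B C
    (by simpa using hAnonneg) (by simpa using hAcoer) hinfsup hCnonneg hCsymm
  obtain ⟨p, hp⟩ := surjective_of_norm_le_of_injective_flip (saddleForm A B C)
    (norm_le_of_norm_add_norm_le A B C hγ.le hest)
    (injective_flip_saddleForm A B C hCsymm hγ'.le hest')
    (F₁.comp (fstL 2 ℝ X Y) + F₂.comp (sndL 2 ℝ X Y))
  refine ⟨(p.fst, p.snd), ContinuousLinearMap.ext fun v => ?_,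
    ContinuousLinearMap.ext fun w => ?_⟩
  · simpa using congr($hp (toLp 2 (v, 0)))
  · simpa using congr($hp (toLp 2 (0, w)))

end SaddlePoint

/-- Babuska–Brezzi theorem: well-posedness of the abstract mixed problem.
`X`, `Y` are real Hilbert spaces; `A : X → X'`, `B : X → Y'`, `C : Y → Y'` are
bounded bilinear operators. `A` is non-negative and coercive on `ker B`,
`B` satisfies the inf-sup condition (expressed via the operator norm of `B.flip y`,
which equals `sup_{x ≠ 0} |B x y| / ‖x‖`), and `C` is non-negative and symmetric.
Then for all data `F₁ ∈ X'`, `F₂ ∈ Y'` the system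
`A x + B' y = F₁`, `-B x + C y = F₂` has a unique solution, which satisfies
`‖x‖ + ‖y‖ ≤ c (‖F₁‖ + ‖F₂‖)` with `c` independent of the data. -/
theorem stmt_0
    {X Y : Type*} [NormedAddCommGroup X] [InnerProductSpace ℝ X] [CompleteSpace X]
    [NormedAddCommGroup Y] [InnerProductSpace ℝ Y] [CompleteSpace Y]
    (A : X →L[ℝ] X →L[ℝ] ℝ) (B : X →L[ℝ] Y →L[ℝ] ℝ) (C : Y →L[ℝ] Y →L[ℝ] ℝ)
    (hAnonneg : ∀ x : X, 0 ≤ A x x)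
    (hAcoer : ∃ α > 0, ∀ x : X, (∀ w : Y, B x w = 0) → α * ‖x‖ ^ 2 ≤ A x x)
    (hinfsup : ∃ β > 0, ∀ y : Y, β * ‖y‖ ≤ ‖B.flip y‖)
    (hCnonneg : ∀ y : Y, 0 ≤ C y y)
    (hCsymm : ∀ y z : Y, C y z = C z y) :
    ∃ c > 0, ∀ (F₁ : X →L[ℝ] ℝ) (F₂ : Y →L[ℝ] ℝ),
      (∃! p : X × Y,
        (∀ v : X, A p.1 v + B v p.2 = F₁ v) ∧
        (∀ w : Y, -B p.1 w + C p.2 w = F₂ w)) ∧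
      (∀ p : X × Y,
        ((∀ v : X, A p.1 v + B v p.2 = F₁ v) ∧
         (∀ w : Y, -B p.1 w + C p.2 w = F₂ w)) →
        ‖p.1‖ + ‖p.2‖ ≤ c * (‖F₁‖ + ‖F₂‖)) := by
  obtain ⟨γ, hγ, hest⟩ := exists_norm_add_norm_le_of_coercive_of_infSup_of_nonneg A B C
    hAnonneg hAcoer hinfsup hCnonneg hCsymm
  refine ⟨γ, hγ, fun F₁ F₂ => ?_⟩
  have hsystem (p : X × Y) : ((∀ v, A p.1 v + B v p.2 = F₁ v) ∧ (∀ w, -B p.1 w + C p.2 w = F₂ w))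
      ↔ A p.1 + B.flip p.2 = F₁ ∧ -B p.1 + C p.2 = F₂ := by
    simp [ContinuousLinearMap.ext_iff]
  simp only [hsystem]
  obtain ⟨p, hp⟩ :=
    exists_add_flip_eq_and_neg_add_eq A B C hAnonneg hAcoer hinfsup hCnonneg hCsymm F₁ F₂
  refine ⟨⟨p, hp, fun q hq => ?_⟩, fun q hq => ?_⟩
  · obtain ⟨h₁, h₂⟩ := eq_of_norm_add_norm_le hest (hq.1.trans hp.1.symm) (hq.2.trans hp.2.symm)
    exact Prod.ext h₁ h₂
  · simpa only [hq.1, hq.2] using hest q.1 q.2
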